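/- arXiv:2601.14206 — 2 statements merged into one kernel-verified Lean document; each statement's English description precedes it below -/
import Mathlib

section
/- Let R_max and N be positive integers. For each nonempty subset X ⊆ {0,…,N−1} with diam(X) ≤ R_max, let h_X be an operator supported on X with h_X |W⟩ = 0 and h_X |0̄⟩ = 0. If p is a natural number with p·R_max ≤ N and (∑_X h_X) |W^p⟩ = E'·|W^p⟩ for some E' ∈ ℂ, then E' = 0. -/
open scoped BigOperators
set_option linter.unusedSectionVars false

noncomputable section

/-- The state space of a collection of qubits indexed by `V`: the complex vector space of
functions from configurations `V → Bool` to `ℂ`. -/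
abbrev QState (V : Type*) := (V → Bool) → ℂ

section Defs

variable {V : Type*} [Fintype V] [DecidableEq V]

/-- The standard basis vector associated to the configuration `f`. -/
def basisVec (f : V → Bool) : QState V := fun g => if g = f then 1 else 0

/-- The creation operator `s†_i` at site `i`. -/
def creOp (i : V) : Module.End ℂ (QState V) where
  toFun ψ := fun g => if g i = true then ψ (Function.update g i false) else 0
  map_add' ψ φ := by funext g; by_cases h : g i = true <;> simp [h]
  map_smul' a ψ := by funext g; by_cases h : g i = true <;> simp [h]

/-- The annihilation operator `s_i` at site `i`. -/
def annOp (i : V) : Module.End ℂ (QState V) where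
  toFun ψ := fun g => if g i = false then ψ (Function.update g i true) else 0
  map_add' ψ φ := by funext g; by_cases h : g i = false <;> simp [h]
  map_smul' a ψ := by funext g; by_cases h : g i = false <;> simp [h]

@[simp] lemma creOp_apply (i : V) (ψ : QState V) (g : V → Bool) :
    creOp i ψ g = if g i = true then ψ (Function.update g i false) else 0 := rfl

variable (V)

/-- The vacuum `|0̄⟩`: the basis vector of the all-false configuration. -/
def vac : QState V := basisVec (fun _ => false)

/-- The total raising operator `S† = ∑ i, s†_i`. -/
def Sdag : Module.End ℂ (QState V) := ∑ i : V, creOp i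

/-- The number operator `N̂ = ∑ i, s†_i s_i`. -/
def numOp : Module.End ℂ (QState V) := ∑ i : V, creOp i * annOp i

/-- The unnormalized Dicke state `|W^p⟩ = (S†)^p |0̄⟩`. -/
def WState (p : ℕ) : QState V := ((Sdag V) ^ p) (vac V)

variable {V}

/-- Creation operators at different sites commute. -/
lemma creOp_commute (i j : V) : Commute (creOp (V := V) i) (creOp j) := by
  rcases eq_or_ne i j with rfl | hij
  · exact Commute.refl _
  · show creOp i * creOp j = creOp j * creOp i
    refine LinearMap.ext fun ψ => funext fun g => ?_
    simp only [Module.End.mul_apply, creOp_apply]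
    by_cases hi : g i = true <;> by_cases hj : g j = true <;>
      simp [hi, hj, Function.update_of_ne hij, Function.update_of_ne hij.symm,
        Function.update_comm hij]

/-- The product `∏_{j ∈ Y} s†_j` of creation operators over a finite set `Y` of sites
(the operators commute, so the product is well defined; the empty product is the identity). -/
def creProd (Y : Finset V) : Module.End ℂ (QState V) :=
  Y.noncommProd creOp fun a _ b _ _ => creOp_commute a b

/-- The operator `O` is supported on the set of sites `X`. -/
def SupportedOn (O : Module.End ℂ (QState V)) (X : Set V) : Prop :=
  (∀ f g : V → Bool, (∃ i ∉ X, f i ≠ g i) → O (basisVec f) g = 0) ∧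
  (∀ f f' g g' : V → Bool,
    (∀ i ∈ X, f i = f' i) → (∀ i ∈ X, g i = g' i) →
    (∀ i ∉ X, f i = g i) → (∀ i ∉ X, f' i = g' i) →
    O (basisVec f) g = O (basisVec f') g')

/-- An operator is `k`-local if it is a finite sum of operators each supported
on a subset of at most `k` sites. -/
def IsKLocal (k : ℕ) (O : Module.End ℂ (QState V)) : Prop :=
  ∃ (n : ℕ) (h : Fin n → Module.End ℂ (QState V)) (X : Fin n → Finset V),
    (∀ t, SupportedOn (h t) ↑(X t)) ∧ (∀ t, (X t).card ≤ k) ∧ O = ∑ t, h t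

/-- Vertices `i` and `j` are within distance `r` in the graph `G`:
they are joined by a walk of length at most `r`. -/
def WithinDist (G : SimpleGraph V) (r : ℕ) (i j : V) : Prop :=
  ∃ w : G.Walk i j, w.length ≤ r

/-- The ball of radius `r` around vertex `i` in the graph `G`. -/
def gball (G : SimpleGraph V) (i : V) (r : ℕ) : Set V := {j | WithinDist G r i j}

/-- `diam(X) ≤ R` with respect to `G`: every two vertices of `X` are within distance `R - 1`. -/
def GDiamLE (G : SimpleGraph V) (X : Finset V) (R : ℕ) : Prop :=
  ∀ i ∈ X, ∀ j ∈ X, WithinDist G (R - 1) i j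

/-- `H` is a Hamiltonian of range `R` with respect to the graph `G`: a finite sum over
nonempty subsets `X` with `diam(X) ≤ R` of operators supported on `X`. -/
def IsRangeHam (G : SimpleGraph V) (R : ℕ) (H : Module.End ℂ (QState V)) : Prop :=
  ∃ h : Finset V → Module.End ℂ (QState V),
    (∀ X, SupportedOn (h X) ↑X) ∧
    (∀ X, h X ≠ 0 → X.Nonempty ∧ GDiamLE G X R) ∧
    H = ∑ X : Finset V, h X

/-- `H` is a `k`-local Hamiltonian of range `R` with respect to the graph `G`. -/
def IsKLocalRangeHam (G : SimpleGraph V) (k R : ℕ) (H : Module.End ℂ (QState V)) : Prop :=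
  ∃ h : Finset V → Module.End ℂ (QState V),
    (∀ X, SupportedOn (h X) ↑X) ∧
    (∀ X, h X ≠ 0 → X.Nonempty ∧ GDiamLE G X R ∧ X.card ≤ k) ∧
    H = ∑ X : Finset V, h X

/-- An invertible linear operator `M` is `δ`-locality-preserving with respect to `G` if
conjugation by `M` or `M⁻¹` increases the range of any operator by at most `δ`. -/
def LocalityPreserving (G : SimpleGraph V) (δ : ℕ) (M : QState V ≃ₗ[ℂ] QState V) : Prop :=
  ∀ R : ℕ, 0 < R → ∀ O : Module.End ℂ (QState V), IsRangeHam G R O →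
    IsRangeHam G (R + δ) (M.toLinearMap ∘ₗ O ∘ₗ M.symm.toLinearMap) ∧
    IsRangeHam G (R + δ) (M.symm.toLinearMap ∘ₗ O ∘ₗ M.toLinearMap)

end Defs

section Chain

/-- Distance between two sites of the open chain `{0, …, N-1}`. -/
def chainDist {N : ℕ} (i j : Fin N) : ℕ := ((i : ℤ) - (j : ℤ)).natAbs

/-- `diam(X) ≤ R` on the open chain: `diam(X) = 1 + max |i - j|`. -/
def ChainDiamLE {N : ℕ} (X : Finset (Fin N)) (R : ℕ) : Prop :=
  ∀ i ∈ X, ∀ j ∈ X, chainDist i j + 1 ≤ R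

/-- `H` is a Hamiltonian of range `R` on the open chain of `N` sites. -/
def IsChainRangeHam {N : ℕ} (R : ℕ) (H : Module.End ℂ (QState (Fin N))) : Prop :=
  ∃ h : Finset (Fin N) → Module.End ℂ (QState (Fin N)),
    (∀ X, SupportedOn (h X) ↑X) ∧
    (∀ X, h X ≠ 0 → X.Nonempty ∧ ChainDiamLE X R) ∧
    H = ∑ X : Finset (Fin N), h X

/-- `H` is a `k`-local Hamiltonian of range `R` on the open chain of `N` sites. -/
def IsChainKLocalRangeHam {N : ℕ} (k R : ℕ) (H : Module.End ℂ (QState (Fin N))) : Prop :=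
  ∃ h : Finset (Fin N) → Module.End ℂ (QState (Fin N)),
    (∀ X, SupportedOn (h X) ↑X) ∧
    (∀ X, h X ≠ 0 → X.Nonempty ∧ ChainDiamLE X R ∧ X.card ≤ k) ∧
    H = ∑ X : Finset (Fin N), h X

end Chain

end

/-! Up to the factor `p!`, `|W^p⟩` is the indicator of the configurations with exactly `p`
occupied sites. A term `h_X` only couples configurations that agree outside `X`, so the
`g`-component of `h_X |W^p⟩` is a multiple of the component of `h_X |W^q⟩` at `g` emptied
outside `X`, where `q` is the number of occupied sites of `g` in `X`; it vanishes when `q ≤ 1`.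
On the chain, the configuration `g` with `p` particles at the sites `0, R, 2R, …` meets every
set of diameter at most `R` at most once, so the `g`-component of `H |W^p⟩` is `0`, while that
of `E' |W^p⟩` is `E' p!`. -/

open Finset Function Nat

section General

variable {V : Type*} [Fintype V] [DecidableEq V]

def occupied (f : V → Bool) : Finset V := {i | f i = true}

@[simp] lemma mem_occupied {f : V → Bool} {i : V} : i ∈ occupied f ↔ f i = true := by
  simp [occupied]

lemma occupied_update_false (f : V → Bool) (i : V) :
    occupied (update f i false) = (occupied f).erase i := by
  ext j
  by_cases hji : j = i <;> simp [hji]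

lemma occupied_piecewise_false (X : Finset V) (f : V → Bool) :
    occupied (X.piecewise f fun _ => false) = occupied f ∩ X := by
  ext i
  by_cases hi : i ∈ X <;> simp [hi]

lemma occupied_decide_mem (S : Finset V) : occupied (fun i => decide (i ∈ S)) = S := by
  ext i
  simp

lemma occupied_eq_empty {f : V → Bool} : occupied f = ∅ ↔ f = fun _ => false := by
  simp [eq_empty_iff_forall_notMem, funext_iff]

lemma Sdag_apply (ψ : QState V) (g : V → Bool) :
    Sdag V ψ g = ∑ i ∈ occupied g, ψ (update g i false) := by
  simp [Sdag, LinearMap.sum_apply, Finset.sum_apply, occupied, sum_filter]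

lemma WState_succ (p : ℕ) : WState V (p + 1) = Sdag V (WState V p) := by
  rw [WState, _root_.pow_succ', Module.End.mul_apply, WState]

lemma WState_apply (p : ℕ) (f : V → Bool) :
    WState V p f = if #(occupied f) = p then (p ! : ℂ) else 0 := by
  induction p generalizing f with
  | zero => simp [WState, vac, basisVec, occupied_eq_empty]
  | succ p ih =>
    have hterm : ∀ i ∈ occupied f, WState V p (update f i false) =
        if #(occupied f) = p + 1 then (p ! : ℂ) else 0 := by
      intro i hi
      have := card_pos.mpr ⟨i, hi⟩
      rw [ih, occupied_update_false, card_erase_of_mem hi]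
      simp only [show #(occupied f) - 1 = p ↔ #(occupied f) = p + 1 by omega]
    rw [WState_succ, Sdag_apply, sum_congr rfl hterm, sum_const, nsmul_eq_mul]
    split_ifs with hcard
    · rw [hcard, factorial_succ]
      push_cast
      ring
    · simp

lemma apply_eq_sum_basisVec (O : Module.End ℂ (QState V)) (ψ : QState V) (g : V → Bool) :
    O ψ g = ∑ f, ψ f * O (basisVec f) g := by
  have hbasis (f : V → Bool) : (fun f' => if f = f' then (1 : ℂ) else 0) = basisVec f := by
    funext f'
    simp [basisVec, eq_comm]
  simp [LinearMap.pi_apply_eq_sum_univ O ψ, Finset.sum_apply, hbasis]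

variable {O : Module.End ℂ (QState V)} {X : Finset V}

lemma SupportedOn.apply_eq_sum (hO : SupportedOn O X) (ψ : QState V) (g : V → Bool) :
    O ψ g = ∑ f with ∀ i ∉ X, f i = g i, ψ f * O (basisVec f) g := by
  rw [apply_eq_sum_basisVec, sum_filter]
  refine sum_congr rfl fun f _ => ?_
  split_ifs with hf
  · rfl
  · push Not at hf
    obtain ⟨i, hi, hfi⟩ := hf
    rw [hO.1 f g ⟨i, by simpa using hi, hfi⟩, mul_zero]

/- `f ↦ X.piecewise f g'` maps the configurations agreeing with `g` outside `X` bijectively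
onto those agreeing with `g'` outside `X`, and preserves the matrix elements of `O`. -/
lemma SupportedOn.apply_eq_mul_apply (hO : SupportedOn O X) {ψ χ : QState V}
    {g g' : V → Bool} {c : ℂ} (hgg' : ∀ i ∈ X, g i = g' i)
    (hψ : ∀ f, (∀ i ∉ X, f i = g i) → ψ f = c * χ (X.piecewise f g')) :
    O ψ g = c * O χ g' := by
  rw [hO.apply_eq_sum, hO.apply_eq_sum, mul_sum]
  refine sum_nbij' (fun f => X.piecewise f g') (fun f => X.piecewise f g) ?_ ?_ ?_ ?_ ?_
  · intro f _
    simp +contextual [piecewise_eq_of_notMem]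
  · intro f _
    simp +contextual [piecewise_eq_of_notMem]
  · intro f hf
    ext i
    by_cases hi : i ∈ X <;> simp_all
  · intro f hf
    ext i
    by_cases hi : i ∈ X <;> simp_all
  · intro f hf
    simp only [mem_filter, mem_univ, true_and] at hf
    have hmatrix : O (basisVec f) g = O (basisVec (X.piecewise f g')) g' :=
      hO.2 _ _ _ _ (fun i hi => (piecewise_eq_of_mem _ _ _ hi).symm) (by simpa using hgg')
        (by simpa using hf) fun i hi => piecewise_eq_of_notMem _ _ _ (by simpa using hi)
    rw [hψ f hf, hmatrix, mul_assoc]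

lemma SupportedOn.WState_apply_eq (hO : SupportedOn O X) (g : V → Bool) :
    O (WState V #(occupied g)) g = ((#(occupied g))! / (#(occupied g ∩ X))! : ℂ) *
      O (WState V #(occupied g ∩ X)) (X.piecewise g fun _ => false) := by
  refine hO.apply_eq_mul_apply (fun i hi => (piecewise_eq_of_mem _ _ _ hi).symm) fun f hf => ?_
  have hout : occupied f \ X = occupied g \ X := by
    ext i
    by_cases hi : i ∈ X <;> simp [hi, hf]
  have hf_card := card_inter_add_card_sdiff (occupied f) X
  have hg_card := card_inter_add_card_sdiff (occupied g) X
  rw [hout] at hf_card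
  rw [piecewise_idem_right, WState_apply, WState_apply, occupied_piecewise_false]
  split_ifs <;> first | omega | simp [factorial_ne_zero]

lemma SupportedOn.WState_apply_eq_zero (hO : SupportedOn O X) (hvac : O (vac V) = 0)
    (hW : O (WState V 1) = 0) {g : V → Bool} (hg : #(occupied g ∩ X) ≤ 1) :
    O (WState V #(occupied g)) g = 0 := by
  have hq : O (WState V #(occupied g ∩ X)) = 0 := by
    interval_cases #(occupied g ∩ X)
    · simpa [WState] using hvac
    · exact hW
  rw [hO.WState_apply_eq, hq, Pi.zero_apply, mul_zero]

theorem eigenvalue_eq_zero_of_card_inter_le_one (h : Finset V → Module.End ℂ (QState V))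
    (hsupp : ∀ X, SupportedOn (h X) ↑X) (hannW : ∀ X, h X (WState V 1) = 0)
    (hannv : ∀ X, h X (vac V) = 0) {S : Finset V} (hS : ∀ X, h X ≠ 0 → #(S ∩ X) ≤ 1) {E' : ℂ}
    (hE : (∑ X, h X) (WState V #S) = E' • WState V #S) : E' = 0 := by
  set g : V → Bool := fun i => decide (i ∈ S)
  have hg : occupied g = S := occupied_decide_mem S
  have hterm (X : Finset V) : h X (WState V #S) g = 0 := by
    rcases eq_or_ne (h X) 0 with hX | hX
    · simp [hX]
    · rw [← hg]
      exact (hsupp X).WState_apply_eq_zero (hannv X) (hannW X) (hg ▸ hS X hX)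
  have hEg := congrFun hE g
  rw [LinearMap.sum_apply, Finset.sum_apply, sum_eq_zero fun X _ => hterm X, Pi.smul_apply,
    WState_apply, hg, if_pos rfl, smul_eq_mul, eq_comm] at hEg
  exact (mul_eq_zero.mp hEg).resolve_right (cast_ne_zero.mpr (factorial_ne_zero _))

end General

lemma le_chainDist_of_eq_mul {N R a b : ℕ} {i j : Fin N} (hi : (i : ℕ) = a * R)
    (hj : (j : ℕ) = b * R) (hab : a ≠ b) : R ≤ chainDist i j := by
  have hab' : 1 ≤ ((a : ℤ) - b).natAbs := by omega
  calc R = 1 * R := (one_mul R).symm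
    _ ≤ ((a : ℤ) - b).natAbs * R := Nat.mul_le_mul_right R hab'
    _ = chainDist i j := by
      rw [chainDist, hi, hj]
      push_cast
      rw [← sub_mul, Int.natAbs_mul, Int.natAbs_natCast]

lemma exists_card_eq_card_inter_le_one_of_chainDiamLE {N R p : ℕ} (hR : 0 < R)
    (hp : p * R ≤ N) : ∃ S : Finset (Fin N), #S = p ∧ ∀ X, ChainDiamLE X R → #(S ∩ X) ≤ 1 := by
  have hlt (k : Fin p) : (k : ℕ) * R < N :=
    calc (k : ℕ) * R < (k + 1) * R := by nlinarith
      _ ≤ p * R := Nat.mul_le_mul_right R k.isLt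
      _ ≤ N := hp
  let e : Fin p ↪ Fin N :=
    ⟨fun k => ⟨k * R, hlt k⟩, fun a b hab => Fin.ext (eq_of_mul_eq_mul_right hR (Fin.mk.inj hab))⟩
  refine ⟨univ.map e, by simp, fun X hX => card_le_one.mpr fun i hi j hj => ?_⟩
  simp only [mem_inter, mem_map, mem_univ, true_and] at hi hj
  obtain ⟨⟨a, rfl⟩, hiX⟩ := hi
  obtain ⟨⟨b, rfl⟩, hjX⟩ := hj
  by_contra hne
  have hsep := le_chainDist_of_eq_mul (i := e a) (j := e b) rfl rfl
    fun h => hne (congrArg e (Fin.ext h))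
  have hdiam := hX _ hiX _ hjX
  omega

theorem annihilation_finite_fraction_1D_general
    (Rmax N : ℕ) (hRmax : 0 < Rmax)
    (h : Finset (Fin N) → Module.End ℂ (QState (Fin N)))
    (hsupp : ∀ X, SupportedOn (h X) ↑X)
    (hdiam : ∀ X, ¬(X.Nonempty ∧ ChainDiamLE X Rmax) → h X = 0)
    (hannW : ∀ X, h X (WState (Fin N) 1) = 0)
    (hannv : ∀ X, h X (vac (Fin N)) = 0)
    (p : ℕ) (hp : p * Rmax ≤ N) (E' : ℂ)
    (hE : (∑ X : Finset (Fin N), h X) (WState (Fin N) p) = E' • WState (Fin N) p) :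
    E' = 0 := by
  obtain ⟨S, rfl, hS⟩ := exists_card_eq_card_inter_le_one_of_chainDiamLE hRmax hp
  refine eigenvalue_eq_zero_of_card_inter_le_one h hsupp hannW hannv (fun X hX => ?_) hE
  exact hS X (Not.imp_symm (hdiam X) hX).2

/-- Annihilation of a finite fraction of the Dicke tower on the open chain:
a sum of local annihilators of `|W⟩` and `|0̄⟩` with diameters at most `R_max` has
eigenvalue 0 on `|W^p⟩` whenever `p · R_max ≤ N`. -/
theorem annihilation_finite_fraction_1D
    (Rmax N : ℕ) (hRmax : 0 < Rmax) (hN : 0 < N)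
    (h : Finset (Fin N) → Module.End ℂ (QState (Fin N)))
    (hsupp : ∀ X, SupportedOn (h X) ↑X)
    (hdiam : ∀ X, ¬(X.Nonempty ∧ ChainDiamLE X Rmax) → h X = 0)
    (hannW : ∀ X, h X (WState (Fin N) 1) = 0)
    (hannv : ∀ X, h X (vac (Fin N)) = 0)
    (p : ℕ) (hp : p * Rmax ≤ N) (E' : ℂ)
    (hE : (∑ X : Finset (Fin N), h X) (WState (Fin N) p) = E' • WState (Fin N) p) :
    E' = 0 :=
  annihilation_finite_fraction_1D_general Rmax N hRmax h hsupp hdiam hannW hannv p hp E' hE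
end

section
/- Let V be a finite set of qubit sites, k a positive integer, and O a k-local operator on the state space. Define the iterated commutators C₀ = O and C_{m+1} = C_m S† − S† C_m. Then C_{2k+1} = 0. -/
open scoped BigOperators
set_option linter.unusedSectionVars false

noncomputable section

/-! Write `S† = A + B`, where `A` sums the creation operators over the support `X` of a local
term `O` (with `|X| ≤ k`) and `B` those outside it. `B` commutes with `A` and with `O`, so the
iterated commutators of `O` with `S†` are those with `A`. The `s†_i` commute and square to zero,
hence `A ^ (k + 1) = 0`; and since `ad A = L_A - R_A` is a difference of commuting operators with
`L_A ^ (k + 1) = R_A ^ (k + 1) = 0`, the binomial theorem gives `(ad A) ^ (2k + 1) = 0`. -/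

section AdjointNilpotent

attribute [local instance] LieRing.ofAssociativeRing

open LieAlgebra

variable {R A : Type*} [CommRing R] [Ring A] [Algebra R A]

theorem LieAlgebra.ad_pow_eq_zero_of_pow_eq_zero {a : A} {k : ℕ} (ha : a ^ (k + 1) = 0) :
    ad R A a ^ (2 * k + 1) = 0 := by
  rw [ad_eq_lmul_left_sub_lmul_right, Pi.sub_apply, sub_eq_add_neg]
  refine (LinearMap.commute_mulLeft_right (R := R) a a).neg_right
    |>.add_pow_eq_zero_of_add_le_succ_of_pow_eq_zero (m := k + 1) (n := k + 1) ?_ ?_ (by omega)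
  · rw [LinearMap.pow_mulLeft, ha, LinearMap.mulLeft_zero_eq_zero]
  · rw [neg_pow, LinearMap.pow_mulRight, ha, LinearMap.mulRight_zero_eq_zero, mul_zero]

theorem commute_ad_pow_apply {a b z : A} (ha : Commute a b) (hz : Commute z b) (m : ℕ) :
    Commute ((ad R A a ^ m) z) b := by
  induction m with
  | zero => simpa using hz
  | succ m ih =>
    rw [pow_succ', Module.End.mul_apply, ad_apply, Ring.lie_def]
    exact (ha.mul_left ih).sub_left (ih.mul_left ha)

theorem ad_add_pow_apply_of_commute {a b z : A} (ha : Commute a b) (hz : Commute z b)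
    (m : ℕ) : (ad R A (a + b) ^ m) z = (ad R A a ^ m) z := by
  induction m with
  | zero => rfl
  | succ m ih =>
    rw [pow_succ', Module.End.mul_apply, ih, pow_succ', Module.End.mul_apply, map_add,
      LinearMap.add_apply, add_eq_left, ad_apply, Ring.lie_def, sub_eq_zero]
    exact (commute_ad_pow_apply ha hz m).symm.eq

theorem eq_zero_of_ad_pow_apply_eq_zero {a : A} {C : ℕ → A}
    (hC : ∀ m, C (m + 1) = C m * a - a * C m) {n : ℕ} (hn : (ad R A a ^ n) (C 0) = 0) :
    C n = 0 := by
  have hC_eq : ∀ m, C m = ((-ad R A a) ^ m) (C 0) := by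
    intro m
    induction m with
    | zero => rfl
    | succ m ih =>
      rw [hC, ih, pow_succ' _ m, Module.End.mul_apply, LinearMap.neg_apply, ad_apply,
        Ring.lie_def, neg_sub]
  rw [hC_eq, neg_pow, Module.End.mul_apply, hn, map_zero]

end AdjointNilpotent

theorem Finset.sum_pow_card_add_one_eq_zero {ι M : Type*} [Semiring M] (s : Finset ι)
    (x : ι → M) (hcomm : ∀ i j, Commute (x i) (x j)) (hsq : ∀ i, x i ^ 2 = 0) :
    (∑ i ∈ s, x i) ^ (s.card + 1) = 0 := by
  classical
  induction s using Finset.induction_on with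
  | empty => simp
  | insert a s ha ih =>
    rw [Finset.sum_insert ha, Finset.card_insert_of_notMem ha]
    exact (Commute.sum_right _ _ _ fun j _ => hcomm a j)
      |>.add_pow_eq_zero_of_add_le_succ_of_pow_eq_zero (hsq a) ih (by omega)

section Qubits

attribute [local instance] LieRing.ofAssociativeRing

variable {V : Type*} [Fintype V] [DecidableEq V]

theorem basisVec_eq_single (f : V → Bool) : basisVec f = Pi.single f 1 := by
  funext g
  simp [basisVec, Pi.single_apply]

theorem Module.End.ext_basisVec {A B : Module.End ℂ (QState V)}
    (h : ∀ f, A (basisVec f) = B (basisVec f)) : A = B :=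
  (Pi.basisFun ℂ (V → Bool)).ext fun f => by simpa [basisVec_eq_single] using h f

theorem creOp_basisVec (i : V) (f : V → Bool) :
    creOp i (basisVec f) = if f i then 0 else basisVec (Function.update f i true) := by
  funext g
  by_cases hfi : f i <;> by_cases hgi : g i <;>
    simp [basisVec, hfi, hgi, Function.update_eq_iff, Function.eq_update_iff]

theorem creOp_mul_self (i : V) : creOp (V := V) i * creOp i = 0 := by
  refine LinearMap.ext fun ψ => funext fun g => ?_
  simp

theorem sum_creOp_pow_eq_zero {X : Finset V} {k : ℕ} (hX : X.card ≤ k) :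
    (∑ i ∈ X, creOp (V := V) i) ^ (k + 1) = 0 :=
  pow_eq_zero_of_le (by omega) <|
    X.sum_pow_card_add_one_eq_zero _ creOp_commute fun i => by rw [sq, creOp_mul_self]

namespace SupportedOn

variable {O : Module.End ℂ (QState V)} {X : Set V}

theorem apply_eq_zero (hO : SupportedOn O X) {j : V} (hj : j ∉ X) {f g : V → Bool}
    (hfg : f j ≠ g j) : O (basisVec f) g = 0 :=
  hO.1 f g ⟨j, hj, hfg⟩

theorem apply_update (hO : SupportedOn O X) {j : V} (hj : j ∉ X) {f g : V → Bool}
    (hfg : f j = g j) (b : Bool) :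
    O (basisVec (Function.update f j b)) (Function.update g j b) = O (basisVec f) g := by
  by_cases hout : ∀ i ∉ X, f i = g i
  · refine hO.2 _ _ _ _ (fun i hi => ?_) (fun i hi => ?_) (fun i hi => ?_) hout
    · rw [Function.update_of_ne (ne_of_mem_of_not_mem hi hj)]
    · rw [Function.update_of_ne (ne_of_mem_of_not_mem hi hj)]
    · by_cases hij : i = j
      · simp [hij]
      · simp [hij, hout i hi]
  · obtain ⟨i, hi, hne⟩ : ∃ i ∉ X, f i ≠ g i := by simpa using hout
    have hij : i ≠ j := by rintro rfl; exact hne hfg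
    rw [hO.apply_eq_zero hi hne, hO.apply_eq_zero hi (by simpa [hij] using hne)]

theorem commute_creOp (hO : SupportedOn O X) {j : V} (hj : j ∉ X) : Commute O (creOp j) := by
  refine Module.End.ext_basisVec fun f => funext fun g => ?_
  simp only [Module.End.mul_apply, creOp_basisVec, creOp_apply]
  by_cases hfj : f j
  · by_cases hgj : g j <;> simp [hfj, hgj, hO.apply_eq_zero hj]
  · by_cases hgj : g j
    · have hg : g = Function.update (Function.update g j false) j true := by simp [← hgj]
      rw [if_neg hfj, if_pos hgj, hg, hO.apply_update hj (by simpa using hfj)]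
      simp
    · simp [hfj, hgj, hO.apply_eq_zero hj]

end SupportedOn

theorem SupportedOn.ad_Sdag_pow_eq_zero {O : Module.End ℂ (QState V)} {X : Finset V} {k : ℕ}
    (hO : SupportedOn O X) (hX : X.card ≤ k) :
    (LieAlgebra.ad ℂ _ (Sdag V) ^ (2 * k + 1)) O = 0 := by
  have hS : Sdag V = ∑ i ∈ X, creOp i + ∑ i ∈ Xᶜ, creOp i := (X.sum_add_sum_compl _).symm
  rw [hS, ad_add_pow_apply_of_commute
    (Commute.sum_left _ _ _ fun i _ => Commute.sum_right _ _ _ fun j _ => creOp_commute i j)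
    (Commute.sum_right _ _ _ fun j hj => hO.commute_creOp (by simpa using hj)),
    LieAlgebra.ad_pow_eq_zero_of_pow_eq_zero (sum_creOp_pow_eq_zero hX), LinearMap.zero_apply]

theorem IsKLocal.ad_Sdag_pow_eq_zero {O : Module.End ℂ (QState V)} {k : ℕ} (hO : IsKLocal k O) :
    (LieAlgebra.ad ℂ _ (Sdag V) ^ (2 * k + 1)) O = 0 := by
  obtain ⟨n, h, X, hsupp, hcard, rfl⟩ := hO
  rw [map_sum]
  exact Finset.sum_eq_zero fun t _ => (hsupp t).ad_Sdag_pow_eq_zero (hcard t)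

end Qubits

end

theorem nilpotent_commutator_general
    {V : Type*} [Fintype V] [DecidableEq V]
    (k : ℕ) (O : Module.End ℂ (QState V)) (hO : IsKLocal k O)
    (C : ℕ → Module.End ℂ (QState V))
    (hC0 : C 0 = O)
    (hCs : ∀ m, C (m + 1) = C m * Sdag V - Sdag V * C m) :
    C (2 * k + 1) = 0 := by
  subst hC0
  exact eq_zero_of_ad_pow_apply_eq_zero hCs hO.ad_Sdag_pow_eq_zero

/-- Nilpotent commutator: the (2k+1)-fold iterated commutator of a
k-local operator with `S†` vanishes. -/
theorem nilpotent_commutator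
    {V : Type*} [Fintype V] [DecidableEq V]
    (k : ℕ) (hk : 0 < k) (O : Module.End ℂ (QState V)) (hO : IsKLocal k O)
    (C : ℕ → Module.End ℂ (QState V))
    (hC0 : C 0 = O)
    (hCs : ∀ m, C (m + 1) = C m * Sdag V - Sdag V * C m) :
    C (2 * k + 1) = 0 :=
  nilpotent_commutator_general k O hO C hC0 hCs
end
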